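/- Let w ≥ 4 be an integer and let (ũ, ṽ) be the balanced split of w. If w is even, then E(ũ) + E_t(ṽ) ≤ E(ṽ) + E_s(ũ); if w is odd, then E(ũ) + E_t(ṽ) ≥ E(ṽ) + E_s(ũ). -/
import Mathlib


/-- `Eng K` is the largest squared modulus of a point of the modified
`2^K`-ary QAM constellation. -/
noncomputable def Eng (K : ℕ) : ℝ :=
  if K = 2 then 2
  else if K = 3 then 10
  else if K % 2 = 0 then 2 * ((2 : ℝ) ^ (K / 2) - 1) ^ 2
  else ((2 : ℝ) ^ ((K - 1) / 2) - 1) ^ 2 + (3 * (2 : ℝ) ^ ((K - 3) / 2) - 1) ^ 2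

/-- `EngS K` is the larger squared modulus among the nearest neighbors of a
largest-energy corner point of the modified `2^K`-ary QAM constellation
(with the convention `EngS 2 = EngS 3 = 2`). -/
noncomputable def EngS (K : ℕ) : ℝ :=
  if K = 2 then 2
  else if K = 3 then 2
  else if K % 2 = 0 then ((2 : ℝ) ^ (K / 2) - 1) ^ 2 + ((2 : ℝ) ^ (K / 2) - 3) ^ 2
  else ((2 : ℝ) ^ ((K - 1) / 2) - 3) ^ 2 + (3 * (2 : ℝ) ^ ((K - 3) / 2) - 1) ^ 2

/-- `EngT K` is the smaller squared modulus among the nearest neighbors of a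
largest-energy corner point of the modified `2^K`-ary QAM constellation
(with the convention `EngT 2 = EngT 3 = 2`). -/
noncomputable def EngT (K : ℕ) : ℝ :=
  if K = 2 then 2
  else if K = 3 then 2
  else if K % 2 = 0 then ((2 : ℝ) ^ (K / 2) - 1) ^ 2 + ((2 : ℝ) ^ (K / 2) - 3) ^ 2
  else ((2 : ℝ) ^ ((K - 1) / 2) - 1) ^ 2 + (3 * (2 : ℝ) ^ ((K - 3) / 2) - 3) ^ 2

lemma Eng_even' (m : ℕ) : Eng (2*m+4) = 2*((2:ℝ)^(m+2)-1)^2 := by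
  have h : (2*m+4)/2 = m+2 := by omega
  unfold Eng
  rw [if_neg (by omega), if_neg (by omega), if_pos (by omega), h]

lemma Eng_odd' (m : ℕ) : Eng (2*m+5) = ((2:ℝ)^(m+2)-1)^2 + (3*(2:ℝ)^(m+1)-1)^2 := by
  have h1 : (2*m+5-1)/2 = m+2 := by omega
  have h2 : (2*m+5-3)/2 = m+1 := by omega
  unfold Eng
  rw [if_neg (by omega), if_neg (by omega), if_neg (by omega), h1, h2]

lemma EngS_even' (m : ℕ) : EngS (2*m+4) = ((2:ℝ)^(m+2)-1)^2 + ((2:ℝ)^(m+2)-3)^2 := by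
  have h : (2*m+4)/2 = m+2 := by omega
  unfold EngS
  rw [if_neg (by omega), if_neg (by omega), if_pos (by omega), h]

lemma EngS_odd' (m : ℕ) : EngS (2*m+5) = ((2:ℝ)^(m+2)-3)^2 + (3*(2:ℝ)^(m+1)-1)^2 := by
  have h1 : (2*m+5-1)/2 = m+2 := by omega
  have h2 : (2*m+5-3)/2 = m+1 := by omega
  unfold EngS
  rw [if_neg (by omega), if_neg (by omega), if_neg (by omega), h1, h2]

lemma EngT_even' (m : ℕ) : EngT (2*m+4) = ((2:ℝ)^(m+2)-1)^2 + ((2:ℝ)^(m+2)-3)^2 := by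
  have h : (2*m+4)/2 = m+2 := by omega
  unfold EngT
  rw [if_neg (by omega), if_neg (by omega), if_pos (by omega), h]

lemma EngT_odd' (m : ℕ) : EngT (2*m+5) = ((2:ℝ)^(m+2)-1)^2 + (3*(2:ℝ)^(m+1)-3)^2 := by
  have h1 : (2*m+5-1)/2 = m+2 := by omega
  have h2 : (2*m+5-3)/2 = m+1 := by omega
  unfold EngT
  rw [if_neg (by omega), if_neg (by omega), if_neg (by omega), h1, h2]

lemma EngT_le_EngS (K : ℕ) : EngT K ≤ EngS K := by
  rcases Nat.lt_or_ge K 4 with h | h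
  · interval_cases K <;> norm_num [EngS, EngT]
  rcases Nat.even_or_odd K with ⟨k, hk⟩ | ⟨k, hk⟩
  · obtain ⟨m, rfl⟩ : ∃ m, K = 2*m+4 := ⟨k-2, by omega⟩
    rw [EngT_even', EngS_even']
  · obtain ⟨m, rfl⟩ : ∃ m, K = 2*m+5 := ⟨k-2, by omega⟩
    rw [EngT_odd', EngS_odd']
    have hx : (1:ℝ) ≤ (2:ℝ)^(m+1) := one_le_pow₀ (by norm_num)
    have h2 : (2:ℝ)^(m+2) = 2*(2:ℝ)^(m+1) := by ring
    rw [h2]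
    nlinarith [hx]

/-- For the balanced split `(ũ, ṽ) = ((w+1)/2, w/2)` of `w ≥ 4`:
if `w` is even then `E(ũ) + E_t(ṽ) ≤ E(ṽ) + E_s(ũ)`, and if `w` is odd then
`E(ũ) + E_t(ṽ) ≥ E(ṽ) + E_s(ũ)` (Lemma 5). -/
theorem eng_balanced_split_compare (w : ℕ) (hw : 4 ≤ w) :
    (w % 2 = 0 → Eng ((w + 1) / 2) + EngT (w / 2) ≤ Eng (w / 2) + EngS ((w + 1) / 2)) ∧
    (w % 2 = 1 → Eng (w / 2) + EngS ((w + 1) / 2) ≤ Eng ((w + 1) / 2) + EngT (w / 2)) := by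
  constructor
  · intro hpar
    have h : (w+1)/2 = w/2 := by omega
    rw [h]
    have := EngT_le_EngS (w/2)
    linarith
  · intro hpar
    obtain ⟨n, rfl⟩ : ∃ n, w = 2*n+1 := ⟨w/2, by omega⟩
    have hn : 2 ≤ n := by omega
    have h1 : (2*n+1)/2 = n := by omega
    have h2 : (2*n+1+1)/2 = n+1 := by omega
    rw [h1, h2]
    -- cases on n
    rcases Nat.lt_or_ge n 4 with h | h
    · interval_cases n
      · norm_num [Eng, EngS, EngT]
      · norm_num [Eng, EngS, EngT]
    rcases Nat.even_or_odd n with ⟨k, hk⟩ | ⟨k, hk⟩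
    · obtain ⟨m, rfl⟩ : ∃ m, n = 2*m+4 := ⟨k-2, by omega⟩
      have hstep : (2*m+4)+1 = 2*m+5 := by ring
      rw [hstep, Eng_even', Eng_odd', EngS_odd', EngT_even']
      have h2 : (2:ℝ)^(m+2) = 2*(2:ℝ)^(m+1) := by ring
      rw [h2]
      nlinarith [one_le_pow₀ (show (1:ℝ) ≤ 2 by norm_num) (n := m+1)]
    · obtain ⟨m, rfl⟩ : ∃ m, n = 2*m+5 := ⟨k-2, by omega⟩
      have hstep : (2*m+5)+1 = 2*(m+1)+4 := by ring
      rw [hstep, Eng_odd', Eng_even', EngS_even', EngT_odd']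
      have hx : (1:ℝ) ≤ (2:ℝ)^(m+1) := one_le_pow₀ (by norm_num)
      have h2 : (2:ℝ)^(m+2) = 2*(2:ℝ)^(m+1) := by ring
      have h3 : (2:ℝ)^(m+1+2) = 4*(2:ℝ)^(m+1) := by ring
      rw [h2, h3]
      nlinarith [hx]
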